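/- arXiv:2602.10036 — 2 statements merged into one kernel-verified Lean document; each statement's English description precedes it below -/
import Mathlib

section
/- For any X ⊆ (V, Σ)*, the Myhill-Nerode automaton MN(X), obtained by quotienting U↾X by the Nerode congruence x ∼_X y ⟺ x⁻¹X = y⁻¹X, recognizes exactly X: L(MN(X)) = X. -/
namespace GA

/-- A graph alphabet: edges `S` between vertices `V`. -/
structure GraphAlphabet (V S : Type) where
  d0 : S → V
  d1 : S → V

variable {V S : Type}

/-- Typed words: triples `(u, ω, v)`. -/
abbrev TW (V S : Type) := V × List S × V

/-- Composability of a word from `u` to `v`. -/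
def GraphAlphabet.Comp (G : GraphAlphabet V S) : V → List S → V → Prop
  | u, [], v => u = v
  | u, a :: w, v => G.d0 a = u ∧ G.Comp (G.d1 a) w v

/-- `x` is a morphism of the free category `(V,S)*`. -/
def GraphAlphabet.IsTW (G : GraphAlphabet V S) (x : TW V S) : Prop :=
  G.Comp x.1 x.2.1 x.2.2

theorem GraphAlphabet.comp_snoc (G : GraphAlphabet V S) :
    ∀ {u : V} {w : List S} {v : V}, G.Comp u w v → ∀ {a : S}, G.d0 a = v →
      G.Comp u (w ++ [a]) (G.d1 a) := by
  intro u w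
  induction w generalizing u with
  | nil =>
      intro v h a ha
      simp only [GraphAlphabet.Comp] at h
      subst h
      exact ⟨ha, rfl⟩
  | cons b w ih =>
      intro v h a ha
      exact ⟨h.1, ih h.2 ha⟩

/-- Appending a single letter to a typed word. -/
def GraphAlphabet.snoc (G : GraphAlphabet V S) (x : TW V S) (a : S) : TW V S :=
  (x.1, x.2.1 ++ [a], G.d1 a)

/-- Concatenation of typed languages. -/
def cat (X Y : Set (TW V S)) : Set (TW V S) :=
  {z | ∃ (v : V) (w n : List S), (z.1, w, v) ∈ X ∧ (v, n, z.2.2) ∈ Y ∧ z.2.1 = w ++ n}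

/-- `catPow X n = X^(n+1)`. -/
def catPow (X : Set (TW V S)) : ℕ → Set (TW V S)
  | 0 => X
  | n + 1 => cat X (catPow X n)

/-- Kleene plus. -/
def kplus (X : Set (TW V S)) : Set (TW V S) := ⋃ n, catPow X n

/-- Rational sets of morphisms. -/
inductive Rational (G : GraphAlphabet V S) : Set (TW V S) → Prop
  | empty : Rational G ∅
  | single (a : S) : Rational G {(G.d0 a, [a], G.d1 a)}
  | union {X Y : Set (TW V S)} : Rational G X → Rational G Y → Rational G (X ∪ Y)
  | cat {X Y : Set (TW V S)} : Rational G X → Rational G Y → Rational G (cat X Y)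
  | plus {X : Set (TW V S)} : Rational G X → Rational G (kplus X)

/-- An automaton on a graph alphabet. -/
structure Auto (G : GraphAlphabet V S) (Q E : Type) where
  I : Set Q
  F : Set Q
  s : E → Q
  t : E → Q
  μ : Q → V
  lab : E → S
  src_ok : ∀ e, μ (s e) = G.d0 (lab e)
  tgt_ok : ∀ e, μ (t e) = G.d1 (lab e)

variable {G : GraphAlphabet V S} {Q E : Type}

/-- `A.Reach q w q'`: there is a path from `q` to `q'` labeled `w`. -/
inductive Auto.Reach (A : Auto G Q E) : Q → List S → Q → Prop
  | nil (q : Q) : A.Reach q [] q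
  | cons (e : E) {w : List S} {q' : Q} :
      A.Reach (A.t e) w q' → A.Reach (A.s e) (A.lab e :: w) q'

/-- The (typed) language of an automaton. -/
def Auto.Lang (A : Auto G Q E) : Set (TW V S) :=
  {x | ∃ q q', q ∈ A.I ∧ q' ∈ A.F ∧ A.Reach q x.2.1 q' ∧ A.μ q = x.1 ∧ A.μ q' = x.2.2}

/-- `X` is regular: recognized by a finite automaton on `(V,S)`. -/
def Regular (G : GraphAlphabet V S) (X : Set (TW V S)) : Prop :=
  ∃ (Q E : Type) (_ : Finite Q) (_ : Finite E) (A : Auto G Q E), A.Lang = X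

/-- Determinism. -/
def Auto.Deterministic (A : Auto G Q E) : Prop :=
  (∀ q₁ q₂, q₁ ∈ A.I → q₂ ∈ A.I → A.μ q₁ = A.μ q₂ → q₁ = q₂) ∧
  (∀ e₁ e₂ : E, A.s e₁ = A.s e₂ → A.lab e₁ = A.lab e₂ → e₁ = e₂)

/-- Completeness. -/
def Auto.IsComplete (A : Auto G Q E) : Prop :=
  (∀ v : V, ∃ q ∈ A.I, A.μ q = v) ∧
  (∀ (q : Q) (a : S), G.d0 a = A.μ q → ∃ e, A.s e = q ∧ A.lab e = a)

/-- Left quotient `w⁻¹X`. -/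
def GraphAlphabet.lquot (G : GraphAlphabet V S) (X : Set (TW V S)) (w : TW V S) :
    Set (TW V S) :=
  {u | G.IsTW u ∧ u.1 = w.2.2 ∧ (w.1, w.2.1 ++ u.2.1, u.2.2) ∈ X}

/-- Right quotient `Xw⁻¹`. -/
def GraphAlphabet.rquot (G : GraphAlphabet V S) (X : Set (TW V S)) (w : TW V S) :
    Set (TW V S) :=
  {u | G.IsTW u ∧ u.2.2 = w.1 ∧ (u.1, u.2.1 ++ w.2.1, w.2.2) ∈ X}

/-- `suff(X)`: the set of left quotients. -/
def suffQ (G : GraphAlphabet V S) (X : Set (TW V S)) : Set (Set (TW V S)) :=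
  {Y | ∃ w : TW V S, G.IsTW w ∧ G.lquot X w = Y}

/-- `pref(X)`: the set of right quotients. -/
def prefQ (G : GraphAlphabet V S) (X : Set (TW V S)) : Set (Set (TW V S)) :=
  {Y | ∃ w : TW V S, G.IsTW w ∧ G.rquot X w = Y}


/-- Derivative of a quotient set by a letter `a`. -/
def GraphAlphabet.aderiv (G : GraphAlphabet V S) (a : S) (Y : Set (TW V S)) :
    Set (TW V S) :=
  {u | G.IsTW u ∧ u.1 = G.d1 a ∧ (G.d0 a, a :: u.2.1, u.2.2) ∈ Y}

theorem GraphAlphabet.lquot_snoc (G : GraphAlphabet V S) (X : Set (TW V S))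
    {x : TW V S} {a : S} (h : x.2.2 = G.d0 a) :
    G.lquot X (G.snoc x a) = G.aderiv a (G.lquot X x) := by
  ext u
  simp only [GraphAlphabet.lquot, GraphAlphabet.snoc, GraphAlphabet.aderiv,
    Set.mem_setOf_eq, GraphAlphabet.IsTW, GraphAlphabet.Comp, List.append_assoc,
    List.cons_append, List.nil_append]
  constructor
  · rintro ⟨hu, h1, h2⟩
    exact ⟨hu, h1, ⟨⟨trivial, h1 ▸ hu⟩, h.symm, h2⟩⟩
  · rintro ⟨hu, h1, ⟨-, -⟩, -, h2⟩
    exact ⟨hu, h1, h2⟩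

/-- States of the Myhill-Nerode automaton: a Nerode class of a word `x` with
nonempty left quotient, represented by the pair `(x⁻¹X, d₁(x))`. -/
def MNQ (G : GraphAlphabet V S) (X : Set (TW V S)) : Type :=
  {p : Set (TW V S) × V //
    ∃ x : TW V S, G.IsTW x ∧ G.lquot X x = p.1 ∧ p.1.Nonempty ∧ x.2.2 = p.2}

/-- Transitions of the Myhill-Nerode automaton: `([x], a, [xa])`. -/
def MNE (G : GraphAlphabet V S) (X : Set (TW V S)) : Type :=
  {q : MNQ G X × S // G.d0 q.2 = q.1.val.2 ∧ (G.aderiv q.2 q.1.val.1).Nonempty}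

/-- The Myhill-Nerode automaton of `X`. -/
def MN (G : GraphAlphabet V S) (X : Set (TW V S)) : Auto G (MNQ G X) (MNE G X) where
  I := {p | ∃ u : V, (∃ y ∈ X, y.1 = u) ∧
        p.val = (G.lquot X (u, ([] : List S), u), u)}
  F := {p | ∃ x ∈ X, G.IsTW x ∧ p.val = (G.lquot X x, x.2.2)}
  s q := q.val.1
  t q := ⟨(G.aderiv q.val.2 q.val.1.val.1, G.d1 q.val.2), by
    obtain ⟨x, hx1, hx2, hx3, hx4⟩ := q.val.1.prop
    have hda : x.2.2 = G.d0 q.val.2 := by rw [hx4, ← q.prop.1]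
    refine ⟨G.snoc x q.val.2, G.comp_snoc hx1 hda.symm, ?_, ?_, rfl⟩
    · rw [G.lquot_snoc X hda, hx2]
    · exact q.prop.2⟩
  μ p := p.val.2
  lab q := q.val.2
  src_ok q := q.prop.1.symm
  tgt_ok q := rfl

theorem reach_inv (G : GraphAlphabet V S) (X : Set (TW V S)) :
    ∀ {p : MNQ G X} {w : List S} {q : MNQ G X}, (MN G X).Reach p w q →
      ∀ x : TW V S, G.IsTW x → G.lquot X x = p.val.1 → x.2.2 = p.val.2 →
        G.Comp x.2.2 w q.val.2 ∧ q.val.1 = G.lquot X (x.1, x.2.1 ++ w, q.val.2) := by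
  intro p w q h
  induction h with
  | nil q =>
      intro x hx h1 h2
      refine ⟨h2, ?_⟩
      rw [List.append_nil, ← h2, ← h1]
  | cons e hrest ih =>
      intro x hx h1 h2
      have hd0 : G.d0 e.val.2 = x.2.2 := e.prop.1.trans h2.symm
      have htw' : G.IsTW (G.snoc x e.val.2) := G.comp_snoc hx hd0
      have hl' : G.lquot X (G.snoc x e.val.2) = ((MN G X).t e).val.1 := by
        rw [G.lquot_snoc X hd0.symm]
        show _ = G.aderiv e.val.2 e.val.1.val.1
        rw [h1]
        rfl
      obtain ⟨hc, hq⟩ := ih (G.snoc x e.val.2) htw' hl' rfl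
      refine ⟨⟨hd0, hc⟩, ?_⟩
      rw [hq]
      show _ = G.lquot X (x.1, x.2.1 ++ e.val.2 :: _, _)
      simp [GraphAlphabet.snoc, List.append_assoc]

theorem reach_build (G : GraphAlphabet V S) (X : Set (TW V S)) :
    ∀ (w : List S) (p : MNQ G X) (x : TW V S), G.IsTW x →
      G.lquot X x = p.val.1 → x.2.2 = p.val.2 →
      ∀ v : V, G.Comp x.2.2 w v → (x.1, x.2.1 ++ w, v) ∈ X →
      ∃ q : MNQ G X, (MN G X).Reach p w q ∧
        q.val = (G.lquot X (x.1, x.2.1 ++ w, v), v) := by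
  intro w
  induction w with
  | nil =>
      intro p x hx h1 h2 v hcomp hmem
      obtain ⟨x1, x21, x22⟩ := x
      refine ⟨p, Auto.Reach.nil p, ?_⟩
      have hv : x22 = v := hcomp
      rw [List.append_nil, ← hv, h1, show x22 = (Subtype.val p).2 from h2]
  | cons a w ih =>
      intro p x hx h1 h2 v hcomp hmem
      obtain ⟨hd0, hc⟩ := hcomp
      have hd0' : x.2.2 = G.d0 a := hd0.symm
      have hne : (G.aderiv a p.val.1).Nonempty := by
        rw [← h1, ← G.lquot_snoc X hd0']
        refine ⟨(G.d1 a, w, v), hc, rfl, ?_⟩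
        simpa [GraphAlphabet.snoc, List.append_assoc] using hmem
      let e : MNE G X := ⟨(p, a), hd0.trans h2, hne⟩
      have htw' : G.IsTW (G.snoc x a) := G.comp_snoc hx hd0
      have hl' : G.lquot X (G.snoc x a) = ((MN G X).t e).val.1 := by
        rw [G.lquot_snoc X hd0']
        show _ = G.aderiv a p.val.1
        rw [h1]
      have hmem' : ((G.snoc x a).1, (G.snoc x a).2.1 ++ w, v) ∈ X := by
        simpa [GraphAlphabet.snoc, List.append_assoc] using hmem
      obtain ⟨q, hr, hqv⟩ := ih ((MN G X).t e) (G.snoc x a) htw' hl' rfl v hc hmem'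
      refine ⟨q, Auto.Reach.cons e hr, ?_⟩
      rw [hqv]
      simp [GraphAlphabet.snoc, List.append_assoc]

/-- the Myhill-Nerode automaton of `X` recognizes exactly `X`. -/
theorem mn_lang {V S : Type} (G : GraphAlphabet V S) (X : Set (TW V S))
    (hX : ∀ x ∈ X, G.IsTW x) :
    (MN G X).Lang = X := by
  ext x
  constructor
  · rintro ⟨q, q', ⟨u, ⟨y, hyX, hy1⟩, hqval⟩, ⟨y', hy'X, hy'tw, hq'val⟩, hreach, hμq, hμq'⟩
    have hq1 : G.lquot X (u, ([] : List S), u) = q.val.1 := by rw [hqval]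
    have hq2 : ((u, ([] : List S), u) : TW V S).2.2 = q.val.2 := by rw [hqval]
    obtain ⟨hc, hq'⟩ := reach_inv G X hreach (u, ([] : List S), u) rfl hq1 hq2
    have hu : u = x.1 := by
      have : q.val.2 = u := by rw [hqval]
      rw [← hμq]; exact this.symm
    have hv : q'.val.2 = x.2.2 := hμq'
    have hmem0 : ((y'.2.2, ([] : List S), y'.2.2) : TW V S) ∈ G.lquot X y' := by
      refine ⟨rfl, rfl, ?_⟩
      simpa using hy'X
    have heq : G.lquot X y' = G.lquot X (u, [] ++ x.2.1, q'.val.2) := by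
      have h1 : q'.val.1 = G.lquot X y' := by rw [hq'val]
      rw [← h1, hq']
    have hy'v : y'.2.2 = q'.val.2 := by rw [hq'val]
    rw [heq] at hmem0
    obtain ⟨-, -, hmem⟩ := hmem0
    simp only [List.nil_append, List.append_nil] at hmem
    rw [hu, hy'v, hv] at hmem
    simpa using hmem
  · intro hx
    have htw := hX x hx
    have hq0ne : (G.lquot X (x.1, ([] : List S), x.1)).Nonempty := by
      refine ⟨x, htw, rfl, ?_⟩
      simpa using hx
    let q0 : MNQ G X := ⟨(G.lquot X (x.1, ([] : List S), x.1), x.1),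
      (x.1, ([] : List S), x.1), rfl, rfl, hq0ne, rfl⟩
    have hcomp : G.Comp ((x.1, ([] : List S), x.1) : TW V S).2.2 x.2.1 x.2.2 := htw
    have hmem : ((x.1 : V), ([] : List S) ++ x.2.1, x.2.2) ∈ X := by simpa using hx
    obtain ⟨q, hr, hqv⟩ := reach_build G X x.2.1 q0 (x.1, ([] : List S), x.1)
      rfl rfl rfl x.2.2 hcomp hmem
    refine ⟨q0, q, ⟨x.1, ⟨x, hx, rfl⟩, rfl⟩, ⟨x, hx, htw, ?_⟩, hr, rfl, ?_⟩
    · rw [hqv]; simp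
    · exact congrArg Prod.snd hqv

end GA
end

section
/- If the graph alphabet (V, Σ) is such that the subgraph induced by any two vertices is finite, then X ⊆ (V, Σ)* is regular if and only if the set of left quotients suff(X) = {w⁻¹X | w ∈ (V,Σ)*} is finite. -/
namespace GA

variable {V S : Type}

variable {G : GraphAlphabet V S} {Q E : Type}

/-! A finite automaton recognises `w⁻¹X` from the set of states it reaches by reading `w`, so a
language recognised with states `Q` has at most `2 ^ |Q|` left quotients. Conversely, the
nonempty left quotients are the states of a deterministic automaton in which `Y` reads `a` into
`a⁻¹Y` and which accepts exactly `Y` from `Y`. The words of a quotient all start at one vertex,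
so the states lie over finitely many vertices; a transition is determined by its source and its
label, and finiteness of the two-vertex induced subgraphs leaves finitely many labels between
those vertices. -/

theorem GraphAlphabet.Comp.right_unique :
    ∀ {w : List S} {u v v' : V}, G.Comp u w v → G.Comp u w v' → v = v'
  | [], _, _, _, h, h' => h.symm.trans h'
  | _ :: _, _, _, _, h, h' => Comp.right_unique h.2 h'.2

theorem GraphAlphabet.Comp.append :
    ∀ {m n : List S} {u v x : V}, G.Comp u m v → G.Comp v n x → G.Comp u (m ++ n) x
  | [], _, _, _, _, h, h' => h ▸ h'
  | _ :: _, _, _, _, _, h, h' => ⟨h.1, Comp.append h.2 h'⟩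

theorem GraphAlphabet.finite_letters_of_finite_vertices
    (hfin : ∀ u v : V,
      {a : S | (G.d0 a = u ∨ G.d0 a = v) ∧ (G.d1 a = u ∨ G.d1 a = v)}.Finite)
    {W : Set V} (hW : W.Finite) : {a : S | G.d0 a ∈ W ∧ G.d1 a ∈ W}.Finite := by
  refine (hW.biUnion fun u _ => hW.biUnion fun v _ => hfin u v).subset ?_
  rintro a ⟨h0, h1⟩
  simp only [Set.mem_iUnion, Set.mem_ofPred_eq]
  exact ⟨_, h0, _, h1, Or.inl rfl, Or.inr rfl⟩

namespace Auto

variable (A : Auto G Q E)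

theorem Reach.comp {A : Auto G Q E} {q q' : Q} {w : List S} (h : A.Reach q w q') :
    G.Comp (A.μ q) w (A.μ q') := by
  induction h with
  | nil q => rfl
  | cons e _ ih => exact ⟨(A.src_ok e).symm, A.tgt_ok e ▸ ih⟩

theorem reach_append_iff {q q' : Q} {m n : List S} :
    A.Reach q (m ++ n) q' ↔ ∃ p, A.Reach q m p ∧ A.Reach p n q' := by
  induction m generalizing q with
  | nil => exact ⟨fun h => ⟨q, .nil q, h⟩, fun ⟨_, .nil _, h⟩ => h⟩
  | cons a m ih =>
    constructor
    · rintro (_ | ⟨e, h⟩)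
      obtain ⟨p, h₁, h₂⟩ := ih.mp h
      exact ⟨p, .cons e h₁, h₂⟩
    · rintro ⟨p, (_ | ⟨e, h₁⟩), h₂⟩
      exact .cons e (ih.mpr ⟨p, h₁, h₂⟩)

def statesAfter (w : TW V S) : Set Q :=
  {p | ∃ q ∈ A.I, A.μ q = w.1 ∧ A.Reach q w.2.1 p}

def langFrom (P : Set Q) : Set (TW V S) :=
  {u | G.IsTW u ∧ ∃ p ∈ P, A.μ p = u.1 ∧ ∃ q ∈ A.F, A.Reach p u.2.1 q ∧ A.μ q = u.2.2}

theorem mu_of_mem_statesAfter {w : TW V S} (hw : G.IsTW w) {p : Q}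
    (hp : p ∈ A.statesAfter w) : A.μ p = w.2.2 := by
  obtain ⟨q, -, hq, hr⟩ := hp
  exact hr.comp.right_unique (hq ▸ hw)

theorem lquot_lang {w : TW V S} (hw : G.IsTW w) :
    G.lquot A.Lang w = A.langFrom (A.statesAfter w) := by
  ext u
  constructor
  · rintro ⟨hu, hu1, q, q', hq, hq', hr, hμq, hμq'⟩
    obtain ⟨p, hr₁, hr₂⟩ := (A.reach_append_iff).mp hr
    have hp : p ∈ A.statesAfter w := ⟨q, hq, hμq, hr₁⟩
    exact ⟨hu, p, hp, (A.mu_of_mem_statesAfter hw hp).trans hu1.symm, q', hq', hr₂, hμq'⟩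
  · rintro ⟨hu, p, hp, hμp, q', hq', hr₂, hμq'⟩
    obtain ⟨q, hq, hμq, hr₁⟩ := hp
    refine ⟨hu, hμp.symm.trans (A.mu_of_mem_statesAfter hw ⟨q, hq, hμq, hr₁⟩), ?_⟩
    exact ⟨q, q', hq, hq', (A.reach_append_iff).mpr ⟨p, hr₁, hr₂⟩, hμq, hμq'⟩

theorem finite_edges [Finite Q]
    (hfin : ∀ u v : V,
      {a : S | (G.d0 a = u ∨ G.d0 a = v) ∧ (G.d1 a = u ∨ G.d1 a = v)}.Finite)
    (hdet : Function.Injective fun e => (A.s e, A.lab e)) : Finite E := by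
  have hrange : (Set.range fun e => (A.s e, A.lab e)).Finite := by
    refine (Set.finite_univ.prod
      (G.finite_letters_of_finite_vertices hfin (Set.finite_range A.μ))).subset ?_
    rintro _ ⟨e, rfl⟩
    exact ⟨trivial, ⟨A.s e, A.src_ok e⟩, ⟨A.t e, A.tgt_ok e⟩⟩
  have := hrange.to_subtype
  exact Finite.of_injective_finite_range hdet

end Auto

theorem Regular.suffQ_finite {X : Set (TW V S)} (h : Regular G X) : (suffQ G X).Finite := by
  obtain ⟨Q, E, _, _, A, rfl⟩ := h
  refine (Set.finite_range A.langFrom).subset ?_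
  rintro _ ⟨w, hw, rfl⟩
  exact ⟨_, (A.lquot_lang hw).symm⟩

section Residual

variable {X Y : Set (TW V S)}

theorem GraphAlphabet.isTW_letter (a : S) : G.IsTW (G.d0 a, [a], G.d1 a) :=
  ⟨rfl, rfl⟩

theorem isTW_of_mem_suffQ (hY : Y ∈ suffQ G X) {u : TW V S} (hu : u ∈ Y) : G.IsTW u := by
  obtain ⟨w, -, rfl⟩ := hY
  exact hu.1

theorem fst_eq_of_mem_suffQ (hY : Y ∈ suffQ G X) {u u' : TW V S} (hu : u ∈ Y) (hu' : u' ∈ Y) :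
    u.1 = u'.1 := by
  obtain ⟨w, -, rfl⟩ := hY
  exact hu.2.1.trans hu'.2.1.symm

theorem GraphAlphabet.lquot_lquot {w w' : TW V S} (hw' : G.IsTW w') (h : w'.1 = w.2.2) :
    G.lquot (G.lquot X w) w' = G.lquot X (w.1, w.2.1 ++ w'.2.1, w'.2.2) := by
  ext u
  simp only [GraphAlphabet.lquot, Set.mem_ofPred_eq, List.append_assoc]
  constructor
  · rintro ⟨hu, hu1, -, -, hx⟩
    exact ⟨hu, hu1, hx⟩
  · rintro ⟨hu, hu1, hx⟩
    exact ⟨hu, hu1, GraphAlphabet.Comp.append hw' (hu1 ▸ hu), h, hx⟩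

theorem lquot_mem_suffQ (hY : Y ∈ suffQ G X) {w' : TW V S} (hw' : G.IsTW w')
    (hne : (G.lquot Y w').Nonempty) : G.lquot Y w' ∈ suffQ G X := by
  obtain ⟨w, hw, rfl⟩ := hY
  obtain ⟨_, -, -, -, h, -⟩ := hne
  have h' : w'.1 = w.2.2 := h
  rw [G.lquot_lquot hw' h']
  exact ⟨(w.1, w.2.1 ++ w'.2.1, w'.2.2),
    GraphAlphabet.Comp.append hw (by rw [← h']; exact hw'), rfl⟩

variable (G X) in
abbrev ResState : Type := {Y : Set (TW V S) // Y ∈ suffQ G X ∧ Y.Nonempty}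

noncomputable def ResState.vertex (Y : ResState G X) : V := Y.2.2.some.1

theorem ResState.vertex_eq {Y : ResState G X} {u : TW V S} (hu : u ∈ Y.1) :
    ResState.vertex Y = u.1 :=
  fst_eq_of_mem_suffQ Y.2.1 Y.2.2.some_mem hu

variable (G X) in
abbrev ResEdge : Type :=
  {p : ResState G X × S // (G.lquot p.1.1 (G.d0 p.2, [p.2], G.d1 p.2)).Nonempty}

variable (G X) in
noncomputable def resAuto : Auto G (ResState G X) (ResEdge G X) where
  I := {Y | ∃ v, Y.1 = G.lquot X (v, [], v)}
  F := {Y | ∃ v, (v, [], v) ∈ Y.1}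
  s e := e.1.1
  t e := ⟨_, lquot_mem_suffQ e.1.1.2.1 (G.isTW_letter _) e.2, e.2⟩
  μ := ResState.vertex
  lab e := e.1.2
  src_ok e := ResState.vertex_eq e.2.some_mem.2.2
  tgt_ok e := ResState.vertex_eq e.2.some_mem |>.trans e.2.some_mem.2.1

theorem resAuto_injective :
    Function.Injective fun e => ((resAuto G X).s e, (resAuto G X).lab e) :=
  fun _ _ h => Subtype.ext h

theorem resAuto_accepts_iff (Y : ResState G X) (m : List S) (v : V) :
    (∃ Y', (resAuto G X).Reach Y m Y' ∧ Y' ∈ (resAuto G X).F ∧ (resAuto G X).μ Y' = v) ↔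
      (ResState.vertex Y, m, v) ∈ Y.1 := by
  constructor
  · rintro ⟨Y', hr, ⟨v', hv'⟩, rfl⟩
    induction hr with
    | nil Y =>
      show (ResState.vertex Y, [], ResState.vertex Y) ∈ Y.1
      rwa [ResState.vertex_eq hv']
    | cons e _ ih => exact ((resAuto G X).src_ok e ▸ (ih hv').2.2 :)
  · induction m generalizing Y with
    | nil =>
      intro h
      obtain rfl : ResState.vertex Y = v := isTW_of_mem_suffQ Y.2.1 h
      exact ⟨Y, .nil Y, ⟨_, h⟩, rfl⟩
    | cons a m ih =>
      intro h
      obtain ⟨ha, hm⟩ := isTW_of_mem_suffQ Y.2.1 h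
      have hmem : (G.d1 a, m, v) ∈ G.lquot Y.1 (G.d0 a, [a], G.d1 a) := ⟨hm, rfl, ha ▸ h⟩
      let e : ResEdge G X := ⟨(Y, a), _, hmem⟩
      obtain ⟨Y', hr, hF, hv⟩ := ih ((resAuto G X).t e) (by
        rw [show ResState.vertex ((resAuto G X).t e) = G.d1 a from (resAuto G X).tgt_ok e]
        exact hmem)
      exact ⟨Y', .cons e hr, hF, hv⟩

theorem resAuto_lang : (resAuto G X).Lang = {x | x ∈ X ∧ G.IsTW x} := by
  ext x
  constructor
  · rintro ⟨Y, Y', ⟨v, hY⟩, hF, hr, hY1, hY'⟩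
    have hx := (resAuto_accepts_iff Y x.2.1 x.2.2).mp ⟨Y', hr, hF, hY'⟩
    rw [hY] at hx
    obtain ⟨hTW, rfl, hx⟩ := hx
    change ResState.vertex Y = x.1 at hY1
    rw [hY1] at hTW hx
    exact ⟨hx, hTW⟩
  · rintro ⟨hx, hTW⟩
    let Y : ResState G X := ⟨G.lquot X (x.1, [], x.1), ⟨(x.1, [], x.1), rfl, rfl⟩, x, hTW, rfl, hx⟩
    have hY1 : ResState.vertex Y = x.1 := ResState.vertex_eq (u := x) ⟨hTW, rfl, hx⟩
    obtain ⟨Y', hr, hF, hY'⟩ :=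
      (resAuto_accepts_iff Y x.2.1 x.2.2).mpr (hY1 ▸ ⟨hTW, rfl, hx⟩)
    exact ⟨Y, Y', ⟨x.1, rfl⟩, hF, hr, hY1, hY'⟩

theorem regular_of_suffQ_finite
    (hfin : ∀ u v : V,
      {a : S | (G.d0 a = u ∨ G.d0 a = v) ∧ (G.d1 a = u ∨ G.d1 a = v)}.Finite)
    (hX : ∀ x ∈ X, G.IsTW x) (h : (suffQ G X).Finite) : Regular G X := by
  have : Finite (ResState G X) := (h.subset fun _ hY => hY.1).to_subtype
  refine ⟨_, _, this, (resAuto G X).finite_edges hfin resAuto_injective, resAuto G X, ?_⟩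
  rw [resAuto_lang]
  exact Set.sep_eq_self_iff_mem_true.mpr hX

end Residual

/-- Myhill-Nerode theorem: if every two-vertex induced subgraph
of `(V,S)` is finite, then `X ⊆ (V,S)*` is regular iff its set of left
quotients `suff(X)` is finite. -/
theorem regular_iff_suffQ_finite {V S : Type} (G : GraphAlphabet V S)
    (hfin : ∀ u v : V,
      {a : S | (G.d0 a = u ∨ G.d0 a = v) ∧ (G.d1 a = u ∨ G.d1 a = v)}.Finite)
    (X : Set (TW V S)) (hX : ∀ x ∈ X, G.IsTW x) :
    Regular G X ↔ (suffQ G X).Finite :=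
  ⟨Regular.suffQ_finite, regular_of_suffQ_finite hfin hX⟩

end GA
end
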